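/- (Exact conservation of a modified energy.) Consider the linear oscillatory system q̈ = −Ω²q − Aq with A ∈ ℂ^{d×d} self-adjoint, discretized by the trigonometric integrator with filters satisfying ψ₁ = sinc · φ. Then the modified energy ℋ(q, q̇) = (1/2)‖Ω q‖² + (1/2)‖q̇‖² + (1/2) Re((cos(hΩ) Φ q)^* A Φ q) − (1/8) h² ‖Ψ₁ A Φ q‖² is exactly preserved: ℋ(q_{n+1}, q̇_{n+1}) = ℋ(q_n, q̇_n) for every step. -/

import Mathlib

open scoped BigOperators

/-- `sinc ξ = sin ξ / ξ` with `sinc 0 = 1`. -/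
noncomputable def sinc (x : ℝ) : ℝ := if x = 0 then 1 else Real.sin x / x

/-- Entrywise (diagonal-matrix) action of a real function family on `ℂ^d`. -/
noncomputable def dOp {d : ℕ} (f : Fin d → ℝ) (q : EuclideanSpace ℂ (Fin d)) :
    EuclideanSpace ℂ (Fin d) := WithLp.toLp 2 (fun i => (f i : ℂ) * q i)

/-- Position update of the trigonometric integrator for the linear force `g(q) = -A q`:
`q_{n+1} = cos(hΩ) q_n + h sinc(hΩ) q̇_n + ½h² sinc(hΩ) Ψ₁ g(Φ q_n)`. -/
noncomputable def trigStepQ {d : ℕ} (h : ℝ) (ω : Fin d → ℝ) (ψ₁ φ : ℝ → ℝ)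
    (A : EuclideanSpace ℂ (Fin d) →L[ℂ] EuclideanSpace ℂ (Fin d))
    (q p : EuclideanSpace ℂ (Fin d)) : EuclideanSpace ℂ (Fin d) :=
  dOp (fun i => Real.cos (h * ω i)) q + h • dOp (fun i => sinc (h * ω i)) p
    + (h ^ 2 / 2) • dOp (fun i => sinc (h * ω i))
        (dOp (fun i => ψ₁ (h * ω i)) (-(A (dOp (fun i => φ (h * ω i)) q))))

/-- Velocity update of the trigonometric integrator for the linear force `g(q) = -A q`:
`q̇_{n+1} = -Ω sin(hΩ) q_n + cos(hΩ) q̇_n + ½h (cos(hΩ) Ψ₁ g(Φ q_n) + Ψ₁ g(Φ q_{n+1}))`. -/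
noncomputable def trigStepP {d : ℕ} (h : ℝ) (ω : Fin d → ℝ) (ψ₁ φ : ℝ → ℝ)
    (A : EuclideanSpace ℂ (Fin d) →L[ℂ] EuclideanSpace ℂ (Fin d))
    (q p : EuclideanSpace ℂ (Fin d)) : EuclideanSpace ℂ (Fin d) :=
  -(dOp (fun i => ω i * Real.sin (h * ω i)) q) + dOp (fun i => Real.cos (h * ω i)) p
    + (h / 2) • (dOp (fun i => Real.cos (h * ω i))
          (dOp (fun i => ψ₁ (h * ω i)) (-(A (dOp (fun i => φ (h * ω i)) q))))
        + dOp (fun i => ψ₁ (h * ω i))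
            (-(A (dOp (fun i => φ (h * ω i)) (trigStepQ h ω ψ₁ φ A q p)))))

/-- The modified energy
`ℋ(q,q̇) = ½‖Ωq‖² + ½‖q̇‖² + ½ Re((cos(hΩ)Φq)* A Φq) − ⅛h²‖Ψ₁ A Φq‖²`. -/
noncomputable def modEnergy {d : ℕ} (h : ℝ) (ω : Fin d → ℝ) (ψ₁ φ : ℝ → ℝ)
    (A : EuclideanSpace ℂ (Fin d) →L[ℂ] EuclideanSpace ℂ (Fin d))
    (q p : EuclideanSpace ℂ (Fin d)) : ℝ :=
  (1 / 2) * ‖dOp ω q‖ ^ 2 + (1 / 2) * ‖p‖ ^ 2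
    + (1 / 2) * (inner (𝕜 := ℂ) (dOp (fun i => Real.cos (h * ω i)) (dOp (fun i => φ (h * ω i)) q))
        (A (dOp (fun i => φ (h * ω i)) q))).re
    - (1 / 8) * h ^ 2 * ‖dOp (fun i => ψ₁ (h * ω i)) (A (dOp (fun i => φ (h * ω i)) q))‖ ^ 2

/-- The total energy `H(q,q̇) = ½‖Ωq‖² + ½‖q̇‖² + ½ q* A q` of `q̈ = -Ω²q - Aq`. -/
noncomputable def energy {d : ℕ} (ω : Fin d → ℝ)
    (A : EuclideanSpace ℂ (Fin d) →L[ℂ] EuclideanSpace ℂ (Fin d))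
    (q p : EuclideanSpace ℂ (Fin d)) : ℝ :=
  (1 / 2) * ‖dOp ω q‖ ^ 2 + (1 / 2) * ‖p‖ ^ 2 + (1 / 2) * (inner (𝕜 := ℂ) q (A q)).re

/-! The integrator is a kick–flow–kick splitting: a half kick `m = p - (h/2) Ψ₁AΦq`, the exact
time-`h` flow of the harmonic oscillator `q̈ = -Ω²q` taking `(q, m)` to `(q', v)` (a rotation of
`(Ωq, m)` by `hΩ`), and a second half kick `p' = v - (h/2) Ψ₁AΦq'`. Since `ψ₁ = sinc·φ`, the flow
gives `Φq' = cos(hΩ)Φq + hΨ₁m` and, backwards, `cos(hΩ)Φq' - hΨ₁v = Φq`. Written in the kicked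
velocities the modified energy becomes `ℋ(q, p) = ½‖Ωq‖² + ½‖m‖² + ½ Re⟨Φq', AΦq⟩` and
`ℋ(q', p') = ½‖Ωq'‖² + ½‖v‖² + ½ Re⟨Φq, AΦq'⟩`: the rotation preserves the first two terms
and the self-adjointness of `A` the last one. -/

open scoped InnerProductSpace

lemma sin_eq_mul_sinc (x : ℝ) : Real.sin x = x * sinc x := by
  unfold sinc
  split_ifs with hx
  · simp [hx]
  · field_simp

lemma Complex.norm_sq_add_norm_sq_of_rotation {c s : ℝ} (hcs : c ^ 2 + s ^ 2 = 1) (a b : ℂ) :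
    ‖c * a + s * b‖ ^ 2 + ‖-(s * a) + c * b‖ ^ 2 = ‖a‖ ^ 2 + ‖b‖ ^ 2 := by
  simp only [Complex.sq_norm, Complex.normSq_apply, Complex.add_re, Complex.add_im,
    Complex.neg_re, Complex.neg_im, Complex.re_ofReal_mul, Complex.im_ofReal_mul]
  linear_combination (a.re ^ 2 + a.im ^ 2 + b.re ^ 2 + b.im ^ 2) * hcs

section

variable {d : ℕ}

@[simp]
lemma dOp_apply (f : Fin d → ℝ) (x : EuclideanSpace ℂ (Fin d)) (i : Fin d) :
    dOp f x i = f i * x i := rfl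

lemma re_inner_eq_real_inner (x y : EuclideanSpace ℂ (Fin d)) : (⟪x, y⟫_ℂ).re = ⟪x, y⟫_ℝ := by
  simp [PiLp.inner_apply, Complex.re_sum, Complex.inner]

lemma real_inner_dOp_left (f : Fin d → ℝ) (x y : EuclideanSpace ℂ (Fin d)) :
    ⟪dOp f x, y⟫_ℝ = ⟪x, dOp f y⟫_ℝ := by
  simp only [PiLp.inner_apply, dOp_apply, Complex.inner, map_mul, Complex.conj_ofReal]
  congr 1; funext i; congr 1; ring

lemma IsSelfAdjoint.real_inner_map_left
    {A : EuclideanSpace ℂ (Fin d) →L[ℂ] EuclideanSpace ℂ (Fin d)} (hA : IsSelfAdjoint A)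
    (x y : EuclideanSpace ℂ (Fin d)) : ⟪A x, y⟫_ℝ = ⟪x, A y⟫_ℝ := by
  rw [← re_inner_eq_real_inner, ← re_inner_eq_real_inner]
  exact congrArg Complex.re (ContinuousLinearMap.isSelfAdjoint_iff_isSymmetric.mp hA x y)

end

section TrigonometricIntegrator

variable {d : ℕ} (h : ℝ) (ω : Fin d → ℝ) (ψ₁ φ : ℝ → ℝ)
  (A : EuclideanSpace ℂ (Fin d) →L[ℂ] EuclideanSpace ℂ (Fin d))

noncomputable def harmonicFlowQ (q p : EuclideanSpace ℂ (Fin d)) : EuclideanSpace ℂ (Fin d) :=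
  dOp (fun i => Real.cos (h * ω i)) q + h • dOp (fun i => sinc (h * ω i)) p

noncomputable def harmonicFlowP (q p : EuclideanSpace ℂ (Fin d)) : EuclideanSpace ℂ (Fin d) :=
  -(dOp (fun i => ω i * Real.sin (h * ω i)) q) + dOp (fun i => Real.cos (h * ω i)) p

noncomputable def filteredA (q : EuclideanSpace ℂ (Fin d)) : EuclideanSpace ℂ (Fin d) :=
  dOp (fun i => ψ₁ (h * ω i)) (A (dOp (fun i => φ (h * ω i)) q))

lemma trigStepQ_eq_harmonicFlowQ (q p : EuclideanSpace ℂ (Fin d)) :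
    trigStepQ h ω ψ₁ φ A q p = harmonicFlowQ h ω q (p - (h / 2) • filteredA h ω ψ₁ φ A q) := by
  ext i
  simp only [trigStepQ, harmonicFlowQ, filteredA, PiLp.add_apply, PiLp.sub_apply, PiLp.neg_apply,
    PiLp.smul_apply, dOp_apply, Complex.real_smul]
  push_cast
  ring

lemma trigStepP_eq_harmonicFlowP (q p : EuclideanSpace ℂ (Fin d)) :
    trigStepP h ω ψ₁ φ A q p = harmonicFlowP h ω q (p - (h / 2) • filteredA h ω ψ₁ φ A q)
      - (h / 2) • filteredA h ω ψ₁ φ A (trigStepQ h ω ψ₁ φ A q p) := by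
  ext i
  simp only [trigStepP, harmonicFlowP, filteredA, PiLp.add_apply, PiLp.sub_apply, PiLp.neg_apply,
    PiLp.smul_apply, dOp_apply, Complex.real_smul]
  ring

lemma norm_harmonicFlow_sq (q p : EuclideanSpace ℂ (Fin d)) :
    ‖dOp ω (harmonicFlowQ h ω q p)‖ ^ 2 + ‖harmonicFlowP h ω q p‖ ^ 2
      = ‖dOp ω q‖ ^ 2 + ‖p‖ ^ 2 := by
  simp only [EuclideanSpace.norm_sq_eq, ← Finset.sum_add_distrib]
  refine Finset.sum_congr rfl fun i _ => ?_
  have hQ : dOp ω (harmonicFlowQ h ω q p) i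
      = Real.cos (h * ω i) * (ω i * q i) + Real.sin (h * ω i) * p i := by
    simp only [harmonicFlowQ, dOp_apply, PiLp.add_apply, PiLp.smul_apply, Complex.real_smul,
      sin_eq_mul_sinc (h * ω i)]
    push_cast
    ring
  have hP : harmonicFlowP h ω q p i
      = -(Real.sin (h * ω i) * (ω i * q i)) + Real.cos (h * ω i) * p i := by
    simp only [harmonicFlowP, dOp_apply, PiLp.add_apply, PiLp.neg_apply]
    push_cast
    ring
  rw [hQ, hP, dOp_apply]
  exact Complex.norm_sq_add_norm_sq_of_rotation (Real.cos_sq_add_sin_sq _) _ _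

variable {ψ₁ φ}

lemma dOp_harmonicFlowQ (hfilter : ∀ ξ : ℝ, ψ₁ ξ = sinc ξ * φ ξ) (q p : EuclideanSpace ℂ (Fin d)) :
    dOp (fun i => φ (h * ω i)) (harmonicFlowQ h ω q p)
      = dOp (fun i => Real.cos (h * ω i)) (dOp (fun i => φ (h * ω i)) q)
        + h • dOp (fun i => ψ₁ (h * ω i)) p := by
  ext i
  simp only [harmonicFlowQ, dOp_apply, PiLp.add_apply, PiLp.smul_apply, Complex.real_smul,
    hfilter]
  push_cast
  ring

lemma cos_dOp_harmonicFlowQ_sub (hfilter : ∀ ξ : ℝ, ψ₁ ξ = sinc ξ * φ ξ)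
    (q p : EuclideanSpace ℂ (Fin d)) :
    dOp (fun i => Real.cos (h * ω i)) (dOp (fun i => φ (h * ω i)) (harmonicFlowQ h ω q p))
      - h • dOp (fun i => ψ₁ (h * ω i)) (harmonicFlowP h ω q p) = dOp (fun i => φ (h * ω i)) q := by
  ext i
  have hcs : (Real.cos (h * ω i) : ℂ) ^ 2 + (h * ω i * sinc (h * ω i) : ℂ) ^ 2 = 1 := by
    exact_mod_cast sin_eq_mul_sinc (h * ω i) ▸ Real.cos_sq_add_sin_sq (h * ω i)
  simp only [harmonicFlowQ, harmonicFlowP, dOp_apply, PiLp.add_apply, PiLp.sub_apply,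
    PiLp.neg_apply, PiLp.smul_apply, Complex.real_smul, hfilter, sin_eq_mul_sinc (h * ω i)]
  push_cast at hcs ⊢
  linear_combination (φ (h * ω i) : ℂ) * q i * hcs

variable (ψ₁ φ)

lemma modEnergy_add_smul_filteredA {t : ℝ} (ht : t ^ 2 = h ^ 2) (q m : EuclideanSpace ℂ (Fin d)) :
    modEnergy h ω ψ₁ φ A q (m + (t / 2) • filteredA h ω ψ₁ φ A q)
      = (1 / 2) * ‖dOp ω q‖ ^ 2 + (1 / 2) * ‖m‖ ^ 2
        + (1 / 2) * ⟪dOp (fun i => Real.cos (h * ω i)) (dOp (fun i => φ (h * ω i)) q)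
            + t • dOp (fun i => ψ₁ (h * ω i)) m, A (dOp (fun i => φ (h * ω i)) q)⟫_ℝ := by
  have hu : dOp (fun i => ψ₁ (h * ω i)) (A (dOp (fun i => φ (h * ω i)) q))
      = filteredA h ω ψ₁ φ A q := rfl
  rw [modEnergy, re_inner_eq_real_inner, inner_add_left, real_inner_smul_left,
    real_inner_dOp_left (fun i => ψ₁ (h * ω i)) m, hu, norm_add_sq_real, real_inner_smul_right,
    norm_smul, mul_pow, Real.norm_eq_abs, sq_abs]
  linear_combination (‖filteredA h ω ψ₁ φ A q‖ ^ 2 / 8) * ht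

end TrigonometricIntegrator

theorem modified_energy_exact_conservation_general {d : ℕ} (h : ℝ)
    (ω : Fin d → ℝ) (ψ₁ φ : ℝ → ℝ)
    (hfilter : ∀ ξ : ℝ, ψ₁ ξ = sinc ξ * φ ξ)
    (A : EuclideanSpace ℂ (Fin d) →L[ℂ] EuclideanSpace ℂ (Fin d))
    (hA : IsSelfAdjoint A)
    (q p : ℕ → EuclideanSpace ℂ (Fin d))
    (hq : ∀ n : ℕ, q (n + 1) = trigStepQ h ω ψ₁ φ A (q n) (p n))
    (hp : ∀ n : ℕ, p (n + 1) = trigStepP h ω ψ₁ φ A (q n) (p n)) :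
    ∀ n : ℕ, modEnergy h ω ψ₁ φ A (q (n + 1)) (p (n + 1)) = modEnergy h ω ψ₁ φ A (q n) (p n) := by
  intro n
  set Φ := dOp (fun i => φ (h * ω i))
  set u := filteredA h ω ψ₁ φ A
  set m := p n - (h / 2) • u (q n)
  set v := harmonicFlowP h ω (q n) m
  have hq' : q (n + 1) = harmonicFlowQ h ω (q n) m := by
    rw [hq, trigStepQ_eq_harmonicFlowQ]
  have hp' : p (n + 1) = v + (-h / 2) • u (q (n + 1)) := by
    rw [hp, trigStepP_eq_harmonicFlowP, ← hq, neg_div, neg_smul, sub_eq_add_neg]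
  have before : modEnergy h ω ψ₁ φ A (q n) (p n)
      = (1 / 2) * ‖dOp ω (q n)‖ ^ 2 + (1 / 2) * ‖m‖ ^ 2
        + (1 / 2) * ⟪Φ (q (n + 1)), A (Φ (q n))⟫_ℝ := by
    rw [← sub_add_cancel (p n) ((h / 2) • u (q n)),
      modEnergy_add_smul_filteredA (t := h) h ω ψ₁ φ A rfl, ← dOp_harmonicFlowQ h ω hfilter, ← hq']
  have after : modEnergy h ω ψ₁ φ A (q (n + 1)) (p (n + 1))
      = (1 / 2) * ‖dOp ω (q (n + 1))‖ ^ 2 + (1 / 2) * ‖v‖ ^ 2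
        + (1 / 2) * ⟪Φ (q n), A (Φ (q (n + 1)))⟫_ℝ := by
    rw [hp', modEnergy_add_smul_filteredA h ω ψ₁ φ A (neg_sq h), neg_smul, ← sub_eq_add_neg, hq',
      cos_dOp_harmonicFlowQ_sub h ω hfilter]
  have rotation : ‖dOp ω (q (n + 1))‖ ^ 2 + ‖v‖ ^ 2 = ‖dOp ω (q n)‖ ^ 2 + ‖m‖ ^ 2 := by
    rw [hq']
    exact norm_harmonicFlow_sq h ω (q n) m
  have symmetry := hA.real_inner_map_left (Φ (q n)) (Φ (q (n + 1)))
  rw [real_inner_comm] at symmetry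
  linarith

/-- Theorem 1, exact conservation of a modified energy: for the linear system
`q̈ = -Ω²q - Aq` with `A` self-adjoint and filters satisfying `ψ₁ = sinc·φ`, the trigonometric
integrator exactly preserves the modified energy `ℋ`. -/
theorem modified_energy_exact_conservation {d : ℕ} (h : ℝ) (hh : 0 < h)
    (ω : Fin d → ℝ) (hω : ∀ i, 0 ≤ ω i) (ψ₁ φ : ℝ → ℝ)
    (hfilter : ∀ ξ : ℝ, ψ₁ ξ = sinc ξ * φ ξ)
    (A : EuclideanSpace ℂ (Fin d) →L[ℂ] EuclideanSpace ℂ (Fin d))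
    (hA : IsSelfAdjoint A)
    (q p : ℕ → EuclideanSpace ℂ (Fin d))
    (hq : ∀ n : ℕ, q (n + 1) = trigStepQ h ω ψ₁ φ A (q n) (p n))
    (hp : ∀ n : ℕ, p (n + 1) = trigStepP h ω ψ₁ φ A (q n) (p n)) :
    ∀ n : ℕ, modEnergy h ω ψ₁ φ A (q (n + 1)) (p (n + 1)) = modEnergy h ω ψ₁ φ A (q n) (p n) :=
  modified_energy_exact_conservation_general h ω ψ₁ φ hfilter A hA q p hq hp
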